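/- arXiv:1612.09434 — 4 statements merged into one kernel-verified Lean document; each statement's English description precedes it below -/
import Mathlib

section
/- Let H be a nonempty finite subset of (0,∞), let (s_h)_{h∈H} be a family of elements of a real normed vector space E, let V : H → [0,∞), and let 0 < a ≤ b. Define B(h) = max over h' ∈ H with h' ≤ h of the positive part (‖s_{h'} − s_h‖² − a·V(h'))₊, and let ĥ ∈ H be any minimizer over H of h ↦ B(h) + b·V(h). Then for every h ∈ H one has ‖s_{ĥ} − s_h‖² ≤ 2(B(h) + b·V(h)). -/
/-- Deterministic selection step of Lepski's method: if `hsel` minimizes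
`h ↦ B(h) + b·V(h)` over the finite bandwidth set `H`, where
`B(h) = max_{h' ∈ H, h' ≤ h} (‖s_{h'} − s_h‖² − a·V(h'))₊`, then for every `h ∈ H`,
`‖s_hsel − s_h‖² ≤ 2(B(h) + b·V(h))`. -/
theorem lepski_selection {E : Type*} [NormedAddCommGroup E] [NormedSpace ℝ E]
    (H : Finset ℝ) (hH : H.Nonempty) (hpos : ∀ h ∈ H, 0 < h)
    (s : ℝ → E) (V : ℝ → ℝ) (hV : ∀ h ∈ H, 0 ≤ V h)
    (a b : ℝ) (ha : 0 < a) (hab : a ≤ b)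
    (B : ℝ → ℝ)
    (hB : ∀ h (hh : h ∈ H), B h =
      (H.filter (· ≤ h)).sup' ⟨h, Finset.mem_filter.mpr ⟨hh, le_rfl⟩⟩
        (fun h' => max (‖s h' - s h‖ ^ 2 - a * V h') 0))
    (hsel : ℝ) (hselmem : hsel ∈ H)
    (hmin : ∀ h ∈ H, B hsel + b * V hsel ≤ B h + b * V h) :
    ∀ h ∈ H, ‖s hsel - s h‖ ^ 2 ≤ 2 * (B h + b * V h) := by
  intro h hh
  -- nonnegativity of B
  have hBnn : ∀ g (hg : g ∈ H), 0 ≤ B g := by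
    intro g hg
    rw [hB g hg]
    exact le_trans (le_max_right _ 0)
      (Finset.le_sup' (s := H.filter (fun x => x ≤ g))
        (fun h' => max (‖s h' - s g‖ ^ 2 - a * V h') 0)
        (Finset.mem_filter.mpr ⟨hg, le_rfl⟩))
  -- the key bound: if h' ≤ g then ‖s h' - s g‖² ≤ B g + a * V h'
  have key : ∀ h' (hh' : h' ∈ H), ∀ g (hg : g ∈ H), h' ≤ g →
      ‖s h' - s g‖ ^ 2 ≤ B g + a * V h' := by
    intro h' hh' g hg hle
    have : max (‖s h' - s g‖ ^ 2 - a * V h') 0 ≤ B g := by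
      rw [hB g hg]
      exact Finset.le_sup' (s := H.filter (fun x => x ≤ g))
        (fun h' => max (‖s h' - s g‖ ^ 2 - a * V h') 0)
        (Finset.mem_filter.mpr ⟨hh', hle⟩)
    have := le_trans (le_max_left _ 0) this
    linarith
  have hmin' := hmin h hh
  have hVh := hV h hh
  have hVsel := hV hsel hselmem
  have hVb : a * V h ≤ b * V h := mul_le_mul_of_nonneg_right hab hVh
  have hVbsel : a * V hsel ≤ b * V hsel := mul_le_mul_of_nonneg_right hab hVsel
  rcases le_total hsel h with hle | hle
  · have h1 := key hsel hselmem h hh hle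
    have h2 : b * V hsel ≤ B h + b * V h - B hsel := by linarith
    have := hBnn hsel hselmem
    have := hBnn h hh
    have hbVh : 0 ≤ b * V h := mul_nonneg (le_trans ha.le hab) hVh
    have hbVsel : 0 ≤ b * V hsel := mul_nonneg (le_trans ha.le hab) hVsel
    linarith
  · have h1 := key h hh hsel hselmem hle
    rw [norm_sub_rev] at h1
    have := hBnn h hh
    have hbVh : 0 ≤ b * V h := mul_nonneg (le_trans ha.le hab) hVh
    have hbVsel : 0 ≤ b * V hsel := mul_nonneg (le_trans ha.le hab) hVsel
    linarith
end

section
/- Let H be a nonempty finite subset of (0,∞), let (s_h)_{h∈H} and (m_h)_{h∈H} be families of elements of a real normed vector space E, let t ∈ E, let V : H → [0,∞), and let 0 < a ≤ b. Define B(h) = max over h' ∈ H with h' ≤ h of (‖s_{h'} − s_h‖² − a·V(h'))₊, let ĥ ∈ H be any minimizer over H of h ↦ B(h) + b·V(h), and define D(h) = max{ ‖t − m_h‖ , max over h' ∈ H with h' ≤ h of ‖m_{h'} − m_h‖ }. Then for every h ∈ H one has ‖t − s_{ĥ}‖ ≤ D(h) + ‖m_h − s_h‖ + √(2(B(h) +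 b·V(h))). -/
/-- Basic decomposition inequality of Lepski's method: with `B` the estimated bias,
`hsel` the selected bandwidth and `D` the deterministic bias term, for every `h ∈ H`,
`‖t − s_hsel‖ ≤ D(h) + ‖m_h − s_h‖ + √(2(B(h) + b·V(h)))`. -/
theorem lepski_decomposition {E : Type*} [NormedAddCommGroup E] [NormedSpace ℝ E]
    (H : Finset ℝ) (hH : H.Nonempty) (hpos : ∀ h ∈ H, 0 < h)
    (s m : ℝ → E) (t : E) (V : ℝ → ℝ) (hV : ∀ h ∈ H, 0 ≤ V h)
    (a b : ℝ) (ha : 0 < a) (hab : a ≤ b)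
    (B : ℝ → ℝ)
    (hB : ∀ h (hh : h ∈ H), B h =
      (H.filter (· ≤ h)).sup' ⟨h, Finset.mem_filter.mpr ⟨hh, le_rfl⟩⟩
        (fun h' => max (‖s h' - s h‖ ^ 2 - a * V h') 0))
    (hsel : ℝ) (hselmem : hsel ∈ H)
    (hmin : ∀ h ∈ H, B hsel + b * V hsel ≤ B h + b * V h)
    (D : ℝ → ℝ)
    (hD : ∀ h (hh : h ∈ H), D h =
      max ‖t - m h‖
        ((H.filter (· ≤ h)).sup' ⟨h, Finset.mem_filter.mpr ⟨hh, le_rfl⟩⟩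
          (fun h' => ‖m h' - m h‖))) :
    ∀ h ∈ H, ‖t - s hsel‖ ≤ D h + ‖m h - s h‖ + Real.sqrt (2 * (B h + b * V h)) := by
  intro h hh
  have hBnn : ∀ h' (hh' : h' ∈ H), 0 ≤ B h' := by
    intro h' hh'
    rw [hB h' hh']
    have hmem : h' ∈ H.filter (· ≤ h') := Finset.mem_filter.mpr ⟨hh', le_rfl⟩
    exact le_trans (le_max_right (‖s h' - s h'‖ ^ 2 - a * V h') 0)
      (Finset.le_sup' (fun h'' => max (‖s h'' - s h'‖ ^ 2 - a * V h'') 0) hmem)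
  have key : ‖s hsel - s h‖ ^ 2 ≤ 2 * (B h + b * V h) := by
    rcases le_total hsel h with hle | hle
    · have h1 : ‖s hsel - s h‖ ^ 2 - a * V hsel ≤ B h := by
        rw [hB h hh]
        have hmem : hsel ∈ H.filter (· ≤ h) := Finset.mem_filter.mpr ⟨hselmem, hle⟩
        exact le_trans (le_max_left (‖s hsel - s h‖ ^ 2 - a * V hsel) 0)
          (Finset.le_sup' (fun h' => max (‖s h' - s h‖ ^ 2 - a * V h') 0) hmem)
      have h2 : b * V hsel ≤ B h + b * V h :=
        le_trans (le_add_of_nonneg_left (hBnn hsel hselmem)) (hmin h hh)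
      have h3 : a * V hsel ≤ b * V hsel :=
        mul_le_mul_of_nonneg_right hab (hV hsel hselmem)
      have h4 : 0 ≤ b * V h := mul_nonneg (ha.trans_le hab).le (hV h hh)
      nlinarith [hBnn h hh]
    · have h1 : ‖s h - s hsel‖ ^ 2 - a * V h ≤ B hsel := by
        rw [hB hsel hselmem]
        have hmem : h ∈ H.filter (· ≤ hsel) := Finset.mem_filter.mpr ⟨hh, hle⟩
        exact le_trans (le_max_left (‖s h - s hsel‖ ^ 2 - a * V h) 0)
          (Finset.le_sup' (fun h' => max (‖s h' - s hsel‖ ^ 2 - a * V h') 0) hmem)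
      rw [norm_sub_rev]
      have h2 := hmin h hh
      have h3 : a * V h ≤ b * V h := mul_le_mul_of_nonneg_right hab (hV h hh)
      have h4 : 0 ≤ b * V hsel := mul_nonneg (ha.trans_le hab).le (hV hsel hselmem)
      nlinarith [hBnn h hh]
  have hsqrt : ‖s hsel - s h‖ ≤ Real.sqrt (2 * (B h + b * V h)) :=
Real.le_sqrt_of_sq_le key
  have htri : ‖t - s hsel‖ ≤ ‖t - m h‖ + ‖m h - s h‖ + ‖s h - s hsel‖ := by
    have : t - s hsel = (t - m h) + (m h - s h) + (s h - s hsel) := by abel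
    rw [this]
    exact norm_add₃_le
  have hDle : ‖t - m h‖ ≤ D h := by
    rw [hD h hh]; exact le_max_left _ _
  have hrev : ‖s h - s hsel‖ = ‖s hsel - s h‖ := norm_sub_rev _ _
  linarith [htri, hDle, hrev ▸ hsqrt]
end

section
/- Let H be a nonempty finite subset of (0,∞), let (s_h)_{h∈H} and (m_h)_{h∈H} be families of elements of a real normed vector space E, let t ∈ E, let V : H → [0,∞), and let 0 < a ≤ b. Define B(h) = max over h' ∈ H with h' ≤ h of (‖s_{h'} − s_h‖² − a·V(h'))₊, let ĥ ∈ H be any minimizer over H of h ↦ B(h) + b·V(h), and define D(h) = max{ ‖t − m_h‖ , max over h' ∈ H with h' ≤ h of ‖m_{h'} − m_h‖ }. Fix h ∈ H and assume that B(h) ≤ 2·D(h)² and that ‖m_h − s_h‖ ≤ √(a·V(h)). Then ‖t − s_{ĥ}‖ ≤ 3·D(h) + (1+√2)·√(b·V(h)). -/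
private lemma le_of_sq_le_sq'' {x c : ℝ} (hx : 0 ≤ x) (hc : 0 ≤ c) (h : x ^ 2 ≤ c ^ 2) :
    x ≤ c := by nlinarith


set_option maxHeartbeats 1600000

/-- Deterministic combination step of the oracle inequality of Lepski's method:
if `B(h) ≤ 2·D(h)²` and `‖m_h − s_h‖ ≤ √(a·V(h))`, then the selected estimator satisfies
`‖t − s_hsel‖ ≤ 3·D(h) + (1+√2)·√(b·V(h))`. -/
theorem lepski_oracle_step {E : Type*} [NormedAddCommGroup E] [NormedSpace ℝ E]
    (H : Finset ℝ) (hH : H.Nonempty) (hpos : ∀ h ∈ H, 0 < h)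
    (s m : ℝ → E) (t : E) (V : ℝ → ℝ) (hV : ∀ h ∈ H, 0 ≤ V h)
    (a b : ℝ) (ha : 0 < a) (hab : a ≤ b)
    (B : ℝ → ℝ)
    (hB : ∀ h (hh : h ∈ H), B h =
      (H.filter (· ≤ h)).sup' ⟨h, Finset.mem_filter.mpr ⟨hh, le_rfl⟩⟩
        (fun h' => max (‖s h' - s h‖ ^ 2 - a * V h') 0))
    (hsel : ℝ) (hselmem : hsel ∈ H)
    (hmin : ∀ h ∈ H, B hsel + b * V hsel ≤ B h + b * V h)
    (D : ℝ → ℝ)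
    (hD : ∀ h (hh : h ∈ H), D h =
      max ‖t - m h‖
        ((H.filter (· ≤ h)).sup' ⟨h, Finset.mem_filter.mpr ⟨hh, le_rfl⟩⟩
          (fun h' => ‖m h' - m h‖)))
    (h : ℝ) (hh : h ∈ H)
    (hBD : B h ≤ 2 * D h ^ 2)
    (hms : ‖m h - s h‖ ≤ Real.sqrt (a * V h)) :
    ‖t - s hsel‖ ≤ 3 * D h + (1 + Real.sqrt 2) * Real.sqrt (b * V h) := by
  have hVh := hV h hh
  have hVsel := hV hsel hselmem
  have hD0 : 0 ≤ D h := by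
    rw [hD h hh]; exact le_trans (norm_nonneg _) (le_max_left _ _)
  have htm : ‖t - m h‖ ≤ D h := by rw [hD h hh]; exact le_max_left _ _
  have key : ∀ h1 h2, h1 ∈ H → h2 ∈ H → h1 ≤ h2 →
      ‖s h1 - s h2‖ ^ 2 - a * V h1 ≤ B h2 := by
    intro h1 h2 hm1 hm2 hle
    rw [hB h2 hm2]
    have hmem : h1 ∈ H.filter (fun x => x ≤ h2) := Finset.mem_filter.mpr ⟨hm1, hle⟩
    exact le_trans (le_max_left _ 0) (Finset.le_sup' (fun h' => max (‖s h' - s h2‖ ^ 2 - a * V h') 0) hmem)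
  have hBselnn : 0 ≤ B hsel := by
    rw [hB hsel hselmem]
    have hmem : hsel ∈ H.filter (fun x => x ≤ hsel) := Finset.mem_filter.mpr ⟨hselmem, le_rfl⟩
    exact le_trans (le_max_right (‖s hsel - s hsel‖ ^ 2 - a * V hsel) 0)
      (Finset.le_sup' (fun h' => max (‖s h' - s hsel‖ ^ 2 - a * V h') 0) hmem)
  have hmin' : B hsel + b * V hsel ≤ 2 * D h ^ 2 + b * V h :=
    (hmin h hh).trans (by linarith)
  have hbV : 0 ≤ b * V h := by nlinarith
  have hbVsel : 0 ≤ b * V hsel := by nlinarith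
  set S := Real.sqrt (b * V h) with hS
  have hSnn : 0 ≤ S := Real.sqrt_nonneg _
  have hS2 : S ^ 2 = b * V h := Real.sq_sqrt hbV
  have hab' : Real.sqrt (a * V h) ≤ S := Real.sqrt_le_sqrt (by nlinarith)
  have hsqrt2 : (1:ℝ) ≤ Real.sqrt 2 := by
    rw [show (1:ℝ) = Real.sqrt 1 from (Real.sqrt_one).symm]
    exact Real.sqrt_le_sqrt (by norm_num)
  have hsq2 : Real.sqrt 2 ^ 2 = 2 := Real.sq_sqrt (by norm_num)
  have hsqrt2' : Real.sqrt 2 ≤ 2 := by nlinarith [Real.sqrt_nonneg 2]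
  have htri : ‖t - s hsel‖ ≤ ‖t - m h‖ + ‖m h - s h‖ + ‖s hsel - s h‖ := by
    have := norm_add₃_le (a := t - m h) (b := m h - s h) (c := s h - s hsel)
    simp only [sub_add_sub_cancel] at this
    rw [norm_sub_rev (s hsel) (s h)]
    simpa using this
  rcases le_total hsel h with hle | hle
  · -- hsel ≤ h
    have h1 : ‖s hsel - s h‖ ^ 2 - a * V hsel ≤ B h := key hsel h hselmem hh hle
    have haVsel : a * V hsel ≤ b * V hsel := by nlinarith
    have hn2 : ‖s hsel - s h‖ ^ 2 ≤ 4 * D h ^ 2 + S ^ 2 := by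
      rw [hS2]; linarith
    have h4 : ‖s hsel - s h‖ ≤ 2 * D h + S := by
      refine le_of_sq_le_sq'' (norm_nonneg _) (by linarith) ?_
      nlinarith [mul_nonneg hD0 hSnn]
    have h2S : 2 * S ≤ (1 + Real.sqrt 2) * S := by nlinarith
    linarith [hms.trans hab']
  · -- h ≤ hsel
    have h1 : ‖s h - s hsel‖ ^ 2 - a * V h ≤ B hsel := key h hsel hh hselmem hle
    have haV : a * V h ≤ b * V h := by nlinarith
    have hn2 : ‖s h - s hsel‖ ^ 2 ≤ 2 * D h ^ 2 + 2 * S ^ 2 := by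
      rw [hS2]; linarith
    have expand : (Real.sqrt 2 * D h + Real.sqrt 2 * S) ^ 2 = 2 * (D h + S) ^ 2 := by
      rw [show Real.sqrt 2 * D h + Real.sqrt 2 * S = Real.sqrt 2 * (D h + S) by ring,
        mul_pow, hsq2]
    have h4 : ‖s hsel - s h‖ ≤ Real.sqrt 2 * D h + Real.sqrt 2 * S := by
      rw [norm_sub_rev]
      refine le_of_sq_le_sq'' (norm_nonneg _)
        (add_nonneg (mul_nonneg (Real.sqrt_nonneg 2) hD0)
          (mul_nonneg (Real.sqrt_nonneg 2) hSnn)) ?_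
      rw [expand]; nlinarith [mul_nonneg hD0 hSnn]
    have hD2 : Real.sqrt 2 * D h ≤ 2 * D h := mul_le_mul_of_nonneg_right hsqrt2' hD0
    linarith [hms.trans hab']
end

section
/- Let 0 < h' ≤ h and let I₂ ≥ 0. Assume that for P-almost every x ∈ ℝ^m one has ∫ H_r(y−x)² (f(x)−f(y))² dμ(y) ≤ I₂ for both r = h and r = h'. Then E[ ‖(Δ̂_{h'} f − Δ̂_h f) − (Δ_{h'} f − Δ_h f)‖_{2,μ} ] ≤ 2·√(I₂ / n). -/
open MeasureTheory ProbabilityTheory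

/-- The Gaussian kernel `H_h(y) = (4π)^{-d/2} h^{-(d+2)} exp(−‖y‖²/(4h²))` on `ℝ^m`
(with the Euclidean norm). -/
noncomputable def gaussKernel (d m : ℕ) (h : ℝ) (y : EuclideanSpace ℝ (Fin m)) : ℝ :=
  ((4 * Real.pi) ^ ((d : ℝ) / 2))⁻¹ * (h ^ (d + 2))⁻¹ * Real.exp (-‖y‖ ^ 2 / (4 * h ^ 2))

/-- The unnormalized graph Laplacian `Δ̂_h f(y) = (1/n) Σᵢ H_h(y − xᵢ)(f(xᵢ) − f(y))`
built on the points `x₁,…,x_n`. -/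
noncomputable def hatDelta (d : ℕ) {m n : ℕ} (h : ℝ)
    (f : EuclideanSpace ℝ (Fin m) → ℝ) (x : Fin n → EuclideanSpace ℝ (Fin m))
    (y : EuclideanSpace ℝ (Fin m)) : ℝ :=
  (n : ℝ)⁻¹ * ∑ i, gaussKernel d m h (y - x i) * (f (x i) - f y)

/-- The mean operator `Δ_h f(y) = ∫ H_h(y − x)(f(x) − f(y)) dP(x)`. -/
noncomputable def meanDelta (d : ℕ) {m : ℕ} (h : ℝ)
    (P : Measure (EuclideanSpace ℝ (Fin m)))
    (f : EuclideanSpace ℝ (Fin m) → ℝ) (y : EuclideanSpace ℝ (Fin m)) : ℝ :=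
  ∫ x, gaussKernel d m h (y - x) * (f x - f y) ∂P

/-! For the bounded kernel `G(x, y) = (H_{h'} − H_h)(y − x) (f(x) − f(y))` the centred difference
is `Z_ω(y) = n⁻¹ ∑ᵢ G(Xᵢ(ω), y) − ∫ G(x, y) dP(x)`. For fixed `y` this is a centred sample mean of
i.i.d. variables, so `E Z(y)² ≤ n⁻¹ ∫ G(x, y)² dP(x)`. Fubini turns this into
`E ‖Z‖²_{2,μ} ≤ n⁻¹ ∫∫ G(x, y)² dμ(y) dP(x) ≤ 4 I₂ / n`, by `(a − b)² ≤ 2a² + 2b²` and the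
moment hypotheses, and Jensen's inequality for the concave square root gives `2 √(I₂ / n)`. -/

theorem integral_sqrt_le_sqrt_integral {Ω : Type*} [MeasurableSpace Ω] {μ : Measure Ω}
    [IsProbabilityMeasure μ] {u : Ω → ℝ} (hu_nonneg : 0 ≤ᵐ[μ] u) (hu : Integrable u μ) :
    ∫ ω, √(u ω) ∂μ ≤ √(∫ ω, u ω ∂μ) := by
  have hsqrt : Integrable (fun ω => √(u ω)) μ := by
    refine (hu.add (integrable_const 1)).mono'
      (Real.continuous_sqrt.comp_aestronglyMeasurable hu.aestronglyMeasurable) ?_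
    filter_upwards [hu_nonneg] with ω (hω : 0 ≤ u ω)
    rw [Real.norm_of_nonneg (Real.sqrt_nonneg _)]
    show √(u ω) ≤ u ω + 1
    nlinarith [Real.sq_sqrt hω, Real.sqrt_nonneg (u ω)]
  exact Real.strictConcaveOn_sqrt.concaveOn.le_map_integral Real.continuous_sqrt.continuousOn
    isClosed_Ici hu_nonneg hu hsqrt

section SampleMean

variable {Ω α ι : Type*} [MeasurableSpace Ω] [MeasurableSpace α] [Fintype ι] [Nonempty ι]
  {Pr : Measure Ω} [IsProbabilityMeasure Pr] {P : Measure α} [IsProbabilityMeasure P]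
  {X : ι → Ω → α}

theorem integral_sq_sampleMean_sub_le (hX : ∀ i, Measurable (X i))
    (hindep : Pairwise fun i j => IndepFun (X i) (X j) Pr) (hlaw : ∀ i, Pr.map (X i) = P)
    {g : α → ℝ} (hg : Measurable g) (hg2 : MemLp g 2 P) :
    ∫ ω, ((Fintype.card ι : ℝ)⁻¹ * ∑ i, g (X i ω) - ∫ x, g x ∂P) ^ 2 ∂Pr
      ≤ (Fintype.card ι : ℝ)⁻¹ * ∫ x, g x ^ 2 ∂P := by
  have hN : (Fintype.card ι : ℝ) ≠ 0 := Nat.cast_ne_zero.mpr Fintype.card_ne_zero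
  have hmp : ∀ i, MeasurePreserving (X i) Pr P := fun i => ⟨hX i, hlaw i⟩
  set Y : ι → Ω → ℝ := fun i ω => g (X i ω)
  have hY : ∀ i, MemLp (Y i) 2 Pr := fun i => hg2.comp_measurePreserving (hmp i)
  have hY_int : ∀ i, ∫ ω, Y i ω ∂Pr = ∫ x, g x ∂P := fun i => by
    rw [← hlaw i, integral_map (hX i).aemeasurable hg.aestronglyMeasurable]
  have hY_var : ∀ i, Var[Y i; Pr] = Var[g; P] :=
    fun i => (hmp i).variance_fun_comp hg.aemeasurable
  set S : Ω → ℝ := fun ω => (Fintype.card ι : ℝ)⁻¹ * (∑ i, Y i) ω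
  have hS_mean : ∫ ω, S ω ∂Pr = ∫ x, g x ∂P := by
    simp only [S, Finset.sum_apply]
    rw [integral_const_mul, integral_finsetSum _ fun i _ => (hY i).integrable one_le_two]
    simp only [hY_int, Finset.sum_const, Finset.card_univ, nsmul_eq_mul]
    field_simp
  have hS_var : Var[S; Pr] = (Fintype.card ι : ℝ)⁻¹ * Var[g; P] := by
    rw [variance_const_mul, IndepFun.variance_sum (fun i _ => hY i)
      (fun i _ j _ hij => (hindep hij).comp hg hg)]
    simp only [hY_var, Finset.sum_const, Finset.card_univ, nsmul_eq_mul]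
    field_simp
  calc ∫ ω, ((Fintype.card ι : ℝ)⁻¹ * ∑ i, g (X i ω) - ∫ x, g x ∂P) ^ 2 ∂Pr
      = Var[S; Pr] := by
        rw [variance_eq_integral, hS_mean]
        · simp only [S, Y, Finset.sum_apply]
        · simp only [S, Y, Finset.sum_apply]
          fun_prop
    _ = (Fintype.card ι : ℝ)⁻¹ * Var[g; P] := hS_var
    _ ≤ (Fintype.card ι : ℝ)⁻¹ * ∫ x, g x ^ 2 ∂P :=
        mul_le_mul_of_nonneg_left (variance_le_expectation_sq hg.aestronglyMeasurable)
          (by positivity)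

theorem integral_sqrt_integral_sq_sampleMean_sub_le {β : Type*} [MeasurableSpace β]
    {μ : Measure β} [IsFiniteMeasure μ] (hX : ∀ i, Measurable (X i))
    (hindep : Pairwise fun i j => IndepFun (X i) (X j) Pr) (hlaw : ∀ i, Pr.map (X i) = P)
    {G : α → β → ℝ} (hG : Measurable (Function.uncurry G)) {K : ℝ} (hGK : ∀ x y, ‖G x y‖ ≤ K) :
    ∫ ω, √(∫ y, ((Fintype.card ι : ℝ)⁻¹ * ∑ i, G (X i ω) y - ∫ x, G x y ∂P) ^ 2 ∂μ) ∂Pr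
      ≤ √((Fintype.card ι : ℝ)⁻¹ * ∫ x, ∫ y, G x y ^ 2 ∂μ ∂P) := by
  set N : ℝ := (Fintype.card ι : ℝ)
  have hN : 0 < N := Nat.cast_pos.mpr Fintype.card_pos
  set Z : Ω × β → ℝ := fun p => (N⁻¹ * ∑ i, G (X i p.1) p.2 - ∫ x, G x p.2 ∂P) ^ 2
  have hZ_meas : Measurable Z := by
    have hmean : Measurable fun y => ∫ x, G x y ∂P :=
      hG.stronglyMeasurable.integral_prod_left'.measurable
    have hGX : ∀ i, Measurable fun p : Ω × β => G (X i p.1) p.2 :=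
      fun i => hG.comp (((hX i).comp measurable_fst).prodMk measurable_snd)
    exact (((Finset.measurable_sum _ fun i _ => hGX i).const_mul _).sub
      (hmean.comp measurable_snd)).pow_const 2
  have hZ_bdd : ∀ p, ‖Z p‖ ≤ (2 * K) ^ 2 := by
    intro p
    have hsum : ‖N⁻¹ * ∑ i, G (X i p.1) p.2‖ ≤ K := by
      rw [norm_mul, norm_inv, Real.norm_of_nonneg hN.le, inv_mul_le_iff₀ hN]
      calc ‖∑ i, G (X i p.1) p.2‖ ≤ ∑ i, ‖G (X i p.1) p.2‖ := norm_sum_le _ _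
        _ ≤ N * K := by
          simpa [N] using Finset.sum_le_card_nsmul Finset.univ _ K fun i _ => hGK (X i p.1) p.2
    have hint : ‖∫ x, G x p.2 ∂P‖ ≤ K := by
      simpa using norm_integral_le_of_norm_le_const (μ := P) (ae_of_all _ fun x => hGK x p.2)
    rw [norm_pow]
    gcongr
    exact (norm_sub_le _ _).trans (by linarith)
  have hZ_int : Integrable Z (Pr.prod μ) :=
    Integrable.of_bound hZ_meas.aestronglyMeasurable _ (ae_of_all _ hZ_bdd)
  have hG2_int : Integrable (fun p : α × β => G p.1 p.2 ^ 2) (P.prod μ) := by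
    refine Integrable.of_bound (hG.pow_const 2).aestronglyMeasurable (K ^ 2)
      (ae_of_all _ fun p => ?_)
    rw [norm_pow]
    exact pow_le_pow_left₀ (norm_nonneg _) (hGK p.1 p.2) 2
  calc ∫ ω, √(∫ y, Z (ω, y) ∂μ) ∂Pr
      ≤ √(∫ ω, ∫ y, Z (ω, y) ∂μ ∂Pr) :=
        integral_sqrt_le_sqrt_integral
          (ae_of_all _ fun ω => integral_nonneg fun y => sq_nonneg _) hZ_int.integral_prod_left
    _ ≤ √(N⁻¹ * ∫ x, ∫ y, G x y ^ 2 ∂μ ∂P) := by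
      refine Real.sqrt_le_sqrt ?_
      rw [integral_integral_swap hZ_int, integral_integral_swap (f := fun x y => G x y ^ 2) hG2_int,
        ← integral_const_mul]
      refine integral_mono hZ_int.swap.integral_prod_left
        (hG2_int.swap.integral_prod_left.const_mul _) fun y => ?_
      exact integral_sq_sampleMean_sub_le hX hindep hlaw hG.of_uncurry_right
        (MemLp.of_bound hG.of_uncurry_right.aestronglyMeasurable K (ae_of_all _ fun x => hGK x y))

end SampleMean

theorem integral_sub_sq_le {β : Type*} [MeasurableSpace β] {μ : Measure β} {u v : β → ℝ}
    (hu : MemLp u 2 μ) (hv : MemLp v 2 μ) :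
    ∫ y, (u y - v y) ^ 2 ∂μ ≤ 2 * ∫ y, u y ^ 2 ∂μ + 2 * ∫ y, v y ^ 2 ∂μ := by
  rw [← integral_const_mul, ← integral_const_mul,
    ← integral_add (hu.integrable_sq.const_mul 2) (hv.integrable_sq.const_mul 2)]
  refine integral_mono (hu.sub hv).integrable_sq
    ((hu.integrable_sq.const_mul 2).add (hv.integrable_sq.const_mul 2)) fun y => ?_
  nlinarith [sq_nonneg (u y + v y)]

section GraphLaplacian

noncomputable def laplacianTerm (d : ℕ) {m : ℕ} (r : ℝ) (f : EuclideanSpace ℝ (Fin m) → ℝ)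
    (x y : EuclideanSpace ℝ (Fin m)) : ℝ :=
  gaussKernel d m r (y - x) * (f x - f y)

variable {d m : ℕ}

theorem continuous_gaussKernel (r : ℝ) : Continuous (gaussKernel d m r) := by
  unfold gaussKernel
  fun_prop

theorem abs_gaussKernel_le (r : ℝ) (u : EuclideanSpace ℝ (Fin m)) :
    |gaussKernel d m r u| ≤ |gaussKernel d m r 0| := by
  simp only [gaussKernel, norm_zero, abs_mul, Real.abs_exp]
  gcongr
  positivity

variable {r C : ℝ} {f : EuclideanSpace ℝ (Fin m) → ℝ}

theorem measurable_laplacianTerm (hf : Measurable f) :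
    Measurable (Function.uncurry (laplacianTerm d r f)) := by
  have hH := (continuous_gaussKernel (d := d) (m := m) r).measurable
  unfold laplacianTerm
  fun_prop

theorem norm_laplacianTerm_le (hfb : ∀ x, |f x| ≤ C) (x y : EuclideanSpace ℝ (Fin m)) :
    ‖laplacianTerm d r f x y‖ ≤ |gaussKernel d m r 0| * (2 * C) := by
  rw [laplacianTerm, Real.norm_eq_abs, abs_mul]
  exact mul_le_mul (abs_gaussKernel_le r _) ((abs_sub _ _).trans (by linarith [hfb x, hfb y]))
    (abs_nonneg _) (abs_nonneg _)

theorem hatDelta_sub_hatDelta {n : ℕ} (r' : ℝ) (x : Fin n → EuclideanSpace ℝ (Fin m))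
    (y : EuclideanSpace ℝ (Fin m)) :
    hatDelta d r' f x y - hatDelta d r f x y
      = (n : ℝ)⁻¹ * ∑ i, (laplacianTerm d r' f (x i) y - laplacianTerm d r f (x i) y) := by
  simp only [hatDelta, laplacianTerm, ← mul_sub, ← Finset.sum_sub_distrib]

theorem meanDelta_sub_meanDelta {P : Measure (EuclideanSpace ℝ (Fin m))} [IsFiniteMeasure P]
    (hf : Measurable f) (hfb : ∀ x, |f x| ≤ C) (r' : ℝ) (y : EuclideanSpace ℝ (Fin m)) :
    meanDelta d r' P f y - meanDelta d r P f y
      = ∫ x, (laplacianTerm d r' f x y - laplacianTerm d r f x y) ∂P := by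
  have hint : ∀ s, Integrable (fun x => laplacianTerm d s f x y) P := fun s =>
    Integrable.of_bound (measurable_laplacianTerm hf).of_uncurry_right.aestronglyMeasurable _
      (ae_of_all _ fun x => norm_laplacianTerm_le hfb x y)
  rw [integral_sub (hint r') (hint r)]
  rfl

end GraphLaplacian

theorem lemma65_expectation_bound_general
    {Ω : Type*} [MeasurableSpace Ω] (Pr : Measure Ω) [IsProbabilityMeasure Pr]
    (m d n : ℕ) (hn : 1 ≤ n)
    (h h' : ℝ)
    (μ P : Measure (EuclideanSpace ℝ (Fin m))) [IsFiniteMeasure μ] [IsProbabilityMeasure P]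
    (f : EuclideanSpace ℝ (Fin m) → ℝ) (hf : Measurable f)
    (C : ℝ) (hfb : ∀ x, |f x| ≤ C)
    (X : Fin n → Ω → EuclideanSpace ℝ (Fin m)) (hXmeas : ∀ i, Measurable (X i))
    (hindep : iIndepFun X Pr)
    (hlaw : ∀ i, Pr.map (X i) = P)
    (I₂ : ℝ)
    (hmomh : ∀ᵐ x ∂P, ∫ y, gaussKernel d m h (y - x) ^ 2 * (f x - f y) ^ 2 ∂μ ≤ I₂)
    (hmomh' : ∀ᵐ x ∂P, ∫ y, gaussKernel d m h' (y - x) ^ 2 * (f x - f y) ^ 2 ∂μ ≤ I₂) :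
    ∫ ω, Real.sqrt (∫ y,
        ((hatDelta d h' f (fun i => X i ω) y - hatDelta d h f (fun i => X i ω) y)
          - (meanDelta d h' P f y - meanDelta d h P f y)) ^ 2 ∂μ) ∂Pr
      ≤ 2 * Real.sqrt (I₂ / n) := by
  have : Nonempty (Fin n) := ⟨⟨0, hn⟩⟩
  set G := fun x y => laplacianTerm d h' f x y - laplacianTerm d h f x y
  have hG_meas : Measurable (Function.uncurry G) :=
    (measurable_laplacianTerm hf).sub (measurable_laplacianTerm hf)
  have hG_bdd :
      ∀ x y, ‖G x y‖ ≤ |gaussKernel d m h' 0| * (2 * C) + |gaussKernel d m h 0| * (2 * C) :=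
    fun x y => (norm_sub_le _ _).trans
      (add_le_add (norm_laplacianTerm_le hfb x y) (norm_laplacianTerm_le hfb x y))
  have hmemLp : ∀ r x, MemLp (fun y => laplacianTerm d r f x y) 2 μ := fun r x =>
    MemLp.of_bound (measurable_laplacianTerm hf).of_uncurry_left.aestronglyMeasurable _
      (ae_of_all _ (norm_laplacianTerm_le hfb x))
  have hmom : ∀ᵐ x ∂P, ∫ y, G x y ^ 2 ∂μ ≤ 4 * I₂ := by
    filter_upwards [hmomh, hmomh'] with x hx hx'
    calc ∫ y, G x y ^ 2 ∂μ
        ≤ 2 * ∫ y, laplacianTerm d h' f x y ^ 2 ∂μ + 2 * ∫ y, laplacianTerm d h f x y ^ 2 ∂μ :=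
          integral_sub_sq_le (hmemLp h' x) (hmemLp h x)
      _ ≤ 4 * I₂ := by
          simp only [laplacianTerm, mul_pow]
          linarith
  calc _ = ∫ ω, √(∫ y, ((n : ℝ)⁻¹ * ∑ i, G (X i ω) y - ∫ x, G x y ∂P) ^ 2 ∂μ) ∂Pr := by
        simp only [hatDelta_sub_hatDelta, meanDelta_sub_meanDelta hf hfb, G]
    _ ≤ √((n : ℝ)⁻¹ * ∫ x, ∫ y, G x y ^ 2 ∂μ ∂P) := by
        simpa using integral_sqrt_integral_sq_sampleMean_sub_le hXmeas
          (fun i j hij => hindep.indepFun hij) hlaw hG_meas hG_bdd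
    _ ≤ √((n : ℝ)⁻¹ * (4 * I₂)) := by
        gcongr
        refine (integral_mono_of_nonneg (ae_of_all _ fun x => integral_nonneg fun y => sq_nonneg _)
          (integrable_const (4 * I₂)) hmom).trans_eq ?_
        simp
    _ = 2 * √(I₂ / n) := by
        rw [show (n : ℝ)⁻¹ * (4 * I₂) = 2 ^ 2 * (I₂ / n) by ring, Real.sqrt_mul (by norm_num),
          Real.sqrt_sq zero_le_two]

/-- Expected-supremum bound of Lemma 6.5: if the squared kernel moment is bounded by `I₂` for
both bandwidths `h' ≤ h` (`P`-a.e.), then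
`E[‖(Δ̂_{h'}f − Δ̂_h f) − (Δ_{h'}f − Δ_h f)‖_{2,μ}] ≤ 2√(I₂/n)`. -/
theorem lemma65_expectation_bound
    {Ω : Type*} [MeasurableSpace Ω] (Pr : Measure Ω) [IsProbabilityMeasure Pr]
    (m d n : ℕ) (hm : 1 ≤ m) (hd : 1 ≤ d) (hn : 1 ≤ n)
    (h h' : ℝ) (hh' : 0 < h') (hh'h : h' ≤ h)
    (μ P : Measure (EuclideanSpace ℝ (Fin m))) [IsFiniteMeasure μ] [IsProbabilityMeasure P]
    (f : EuclideanSpace ℝ (Fin m) → ℝ) (hf : Measurable f)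
    (C : ℝ) (hfb : ∀ x, |f x| ≤ C)
    (X : Fin n → Ω → EuclideanSpace ℝ (Fin m)) (hXmeas : ∀ i, Measurable (X i))
    (hindep : iIndepFun X Pr)
    (hlaw : ∀ i, Pr.map (X i) = P)
    (I₂ : ℝ) (hI₂ : 0 ≤ I₂)
    (hmomh : ∀ᵐ x ∂P, ∫ y, gaussKernel d m h (y - x) ^ 2 * (f x - f y) ^ 2 ∂μ ≤ I₂)
    (hmomh' : ∀ᵐ x ∂P, ∫ y, gaussKernel d m h' (y - x) ^ 2 * (f x - f y) ^ 2 ∂μ ≤ I₂) :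
    ∫ ω, Real.sqrt (∫ y,
        ((hatDelta d h' f (fun i => X i ω) y - hatDelta d h f (fun i => X i ω) y)
          - (meanDelta d h' P f y - meanDelta d h P f y)) ^ 2 ∂μ) ∂Pr
      ≤ 2 * Real.sqrt (I₂ / n) :=
  lemma65_expectation_bound_general Pr m d n hn h h' μ P f hf C hfb X hXmeas hindep hlaw I₂ hmomh
    hmomh'
end
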